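/- arXiv:2407.17534 — 10 statements merged into one kernel-verified Lean document; each statement's English description precedes it below -/
import Mathlib

section
/- Let r be a positive natural number, let w ∈ ℝ^r with w ≠ 0, and let p₁, p₂ > 0. Define f : ℝ^r → ℝ by f(v) = p₁ · log(1 + exp(−⟨v, w⟩)) + p₂ · log(1 + exp(⟨v, w⟩)), where ⟨·,·⟩ is the Euclidean inner product. If v̂ ∈ ℝ^r is a critical point of f (i.e., the Fréchet derivative of f at v̂ is zero; in particular if v̂ minimizes f), then log(p₁/p₂) = ⟨v̂, w⟩. -/
/-! The loss depends on `v` only through `s = ⟪v, w⟫`, and since `w ≠ 0` a critical point of it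
is a critical point of the scalar loss in `s`, whose derivative `(p₂ eˢ - p₁) / (1 + eˢ)`
vanishes exactly at `s = log (p₁ / p₂)`. -/

open scoped RealInnerProductSpace

open Real

noncomputable def logisticLoss (p₁ p₂ s : ℝ) : ℝ :=
  p₁ * log (1 + exp (-s)) + p₂ * log (1 + exp s)

theorem hasDerivAt_logisticLoss (p₁ p₂ s : ℝ) :
    HasDerivAt (logisticLoss p₁ p₂) ((p₂ * exp s - p₁) / (1 + exp s)) s := by
  have hneg : HasDerivAt (fun s => 1 + exp (-s)) (-exp (-s)) s := by
    simpa using ((hasDerivAt_neg s).exp).const_add 1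
  have hpos : HasDerivAt (fun s => 1 + exp s) (exp s) s := (hasDerivAt_exp s).const_add 1
  refine (((hneg.log (by positivity)).const_mul p₁).add
    ((hpos.log (by positivity)).const_mul p₂)).congr_deriv ?_
  rw [exp_neg]
  field_simp
  ring

theorem log_div_eq_of_logisticLoss_deriv_eq_zero {p₁ p₂ s : ℝ} (hp₂ : 0 < p₂)
    (h : (p₂ * exp s - p₁) / (1 + exp s) = 0) : log (p₁ / p₂) = s := by
  have hp₁ : p₁ = p₂ * exp s := by
    rw [div_eq_zero_iff] at h
    rcases h with h | h
    · linarith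
    · linarith [exp_pos s]
  rw [hp₁, mul_div_cancel_left₀ _ hp₂.ne', log_exp]

theorem HasDerivAt.eq_zero_of_fderiv_comp_inner_eq_zero {E : Type*} [NormedAddCommGroup E]
    [InnerProductSpace ℝ E] {g : ℝ → ℝ} {g' : ℝ} {v w : E} (hg : HasDerivAt g g' ⟪v, w⟫)
    (hw : w ≠ 0) (h : fderiv ℝ (fun u => g ⟪u, w⟫) v = 0) : g' = 0 := by
  have hinner : HasFDerivAt (fun u : E => ⟪u, w⟫) (innerSL ℝ w) v := by
    convert (innerSL ℝ w).hasFDerivAt using 1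
    ext u
    exact real_inner_comm w u
  have hcomp : HasFDerivAt (fun u => g ⟪u, w⟫) (g' • innerSL ℝ w) v :=
    hg.comp_hasFDerivAt v hinner
  have hgw : g' * ⟪w, w⟫ = 0 := by
    rw [hcomp.fderiv] at h
    simpa using congrArg (fun L => L w) h
  exact (mul_eq_zero.mp hgw).resolve_right (inner_self_ne_zero.mpr hw)

theorem stmt_2_general (r : ℕ)
    (w : EuclideanSpace ℝ (Fin r)) (hw : w ≠ 0)
    (p₁ p₂ : ℝ) (hp₂ : 0 < p₂)
    (f : EuclideanSpace ℝ (Fin r) → ℝ)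
    (hf : f = fun v => p₁ * Real.log (1 + Real.exp (-⟪v, w⟫)) +
                       p₂ * Real.log (1 + Real.exp (⟪v, w⟫)))
    (vhat : EuclideanSpace ℝ (Fin r))
    (hcrit : fderiv ℝ f vhat = 0) :
    Real.log (p₁ / p₂) = ⟪vhat, w⟫ := by
  subst hf
  exact log_div_eq_of_logisticLoss_deriv_eq_zero hp₂
    ((hasDerivAt_logisticLoss p₁ p₂ _).eq_zero_of_fderiv_comp_inner_eq_zero hw hcrit)

theorem stmt_2 (r : ℕ) (hr : 0 < r)
    (w : EuclideanSpace ℝ (Fin r)) (hw : w ≠ 0)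
    (p₁ p₂ : ℝ) (hp₁ : 0 < p₁) (hp₂ : 0 < p₂)
    (f : EuclideanSpace ℝ (Fin r) → ℝ)
    (hf : f = fun v => p₁ * Real.log (1 + Real.exp (-⟪v, w⟫)) +
                       p₂ * Real.log (1 + Real.exp (⟪v, w⟫)))
    (vhat : EuclideanSpace ℝ (Fin r))
    (hcrit : fderiv ℝ f vhat = 0) :
    Real.log (p₁ / p₂) = ⟪vhat, w⟫ :=
  stmt_2_general r w hw p₁ p₂ hp₂ f hf vhat hcrit
end

section
/- Let p, r be positive natural numbers, let x ∈ ℝ^p with x ≠ 0, let v ∈ ℝ^r with v ≠ 0, and let p₁, p₂ > 0. Define F : Matrix (Fin p) (Fin r) ℝ → ℝ by F(W) = p₁ · log(1 + exp(−⟨v, Wᵀx⟩)) + p₂ · log(1 + exp(⟨v, Wᵀx⟩)), where ⟨·,·⟩ is the Euclidean inner product on ℝ^r and Wᵀx denotes the matrix-vector product of the transpose of W with x. If Ŵ is a critical point of F (i.e., the Fréchet derivative of F at Ŵ is zero; in particular if Ŵ minimizes F), then log(p₁/p₂) = ⟨v, Ŵᵀx⟩. -/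
/-!
`F` factors as `g ∘ L` with `g t = p₁ log (1 + exp (-t)) + p₂ log (1 + exp t)` and the linear
functional `L W = v ⬝ᵥ (Wᵀ *ᵥ x)`, which is nonzero because `L (x vᵀ) = ‖v‖² ‖x‖²`. By the chain rule
`fderiv F Ŵ = g' (L Ŵ) • L`, so a critical point forces `g' (L Ŵ) = 0`, and
`g' t = (p₂ exp t - p₁) / (1 + exp t)` vanishes exactly at `t = log (p₁ / p₂)`.
-/

open Matrix

attribute [local instance] Matrix.normedAddCommGroup Matrix.normedSpace

namespace Matrix

variable {m n R : Type*} [Fintype m] [Fintype n]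

theorem dotProduct_transpose_vecMulVec_mulVec [CommSemiring R] (x : m → R) (v : n → R) :
    v ⬝ᵥ ((vecMulVec x v)ᵀ *ᵥ x) = (v ⬝ᵥ v) * (x ⬝ᵥ x) := by
  rw [transpose_vecMulVec, vecMulVec_mulVec, op_smul_eq_smul, dotProduct_smul, smul_eq_mul,
    mul_comm]

def transposeMulVecDotProduct [CommSemiring R] (x : m → R) (v : n → R) :
    Matrix m n R →ₗ[R] R where
  toFun W := v ⬝ᵥ (Wᵀ *ᵥ x)
  map_add' A B := by rw [transpose_add, add_mulVec, dotProduct_add]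
  map_smul' c A := by rw [transpose_smul, smul_mulVec, dotProduct_smul]; rfl

theorem transposeMulVecDotProduct_ne_zero [CommRing R] [LinearOrder R] [IsStrictOrderedRing R]
    {x : m → R} {v : n → R} (hx : x ≠ 0) (hv : v ≠ 0) :
    transposeMulVecDotProduct x v ≠ 0 := by
  intro h
  have := LinearMap.congr_fun h (vecMulVec x v)
  simp only [transposeMulVecDotProduct, LinearMap.coe_mk, AddHom.coe_mk,
    dotProduct_transpose_vecMulVec_mulVec, LinearMap.zero_apply, mul_eq_zero,
    dotProduct_self_eq_zero] at this
  tauto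

end Matrix

open Real

theorem hasDerivAt_log_one_add_exp (t : ℝ) :
    HasDerivAt (fun t => log (1 + exp t)) (exp t / (1 + exp t)) t :=
  ((hasDerivAt_exp t).const_add 1).log (by positivity)

theorem hasDerivAt_logisticLoss_s3 (a b t : ℝ) :
    HasDerivAt (fun t => a * log (1 + exp (-t)) + b * log (1 + exp t))
      ((b * exp t - a) / (1 + exp t)) t := by
  have hneg := (hasDerivAt_log_one_add_exp (-t)).comp t (hasDerivAt_neg t)
  refine ((hneg.const_mul a).add ((hasDerivAt_log_one_add_exp t).const_mul b)).congr_deriv ?_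
  rw [exp_neg]
  field_simp
  ring

theorem HasDerivAt.eq_zero_of_fderiv_comp_eq_zero {𝕜 E : Type*} [NontriviallyNormedField 𝕜]
    [NormedAddCommGroup E] [NormedSpace 𝕜 E] {g : 𝕜 → 𝕜} {d : 𝕜} {L : E →L[𝕜] 𝕜} {w : E}
    (hg : HasDerivAt g d (L w)) (hL : L ≠ 0) (h : fderiv 𝕜 (g ∘ L) w = 0) : d = 0 := by
  rw [(hg.comp_hasFDerivAt w L.hasFDerivAt).fderiv] at h
  exact (smul_eq_zero.mp h).resolve_right hL

theorem stmt_3_general (p r : ℕ)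
    (x : Fin p → ℝ) (hx : x ≠ 0)
    (v : Fin r → ℝ) (hv : v ≠ 0)
    (p₁ p₂ : ℝ) (hp₂ : 0 < p₂)
    (F : Matrix (Fin p) (Fin r) ℝ → ℝ)
    (hF : F = fun W => p₁ * Real.log (1 + Real.exp (-(v ⬝ᵥ (Wᵀ *ᵥ x)))) +
                       p₂ * Real.log (1 + Real.exp (v ⬝ᵥ (Wᵀ *ᵥ x))))
    (What : Matrix (Fin p) (Fin r) ℝ)
    (hcrit : fderiv ℝ F What = 0) :
    Real.log (p₁ / p₂) = v ⬝ᵥ (Whatᵀ *ᵥ x) := by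
  set L := (transposeMulVecDotProduct x v).toContinuousLinearMap
  set s := v ⬝ᵥ (Whatᵀ *ᵥ x)
  have hFL : F = (fun t => p₁ * log (1 + exp (-t)) + p₂ * log (1 + exp t)) ∘ L := hF
  have hd : (p₂ * exp s - p₁) / (1 + exp s) = 0 :=
    (hasDerivAt_logisticLoss_s3 p₁ p₂ s).eq_zero_of_fderiv_comp_eq_zero
      ((LinearEquiv.map_ne_zero_iff _).mpr (transposeMulVecDotProduct_ne_zero hx hv)) (hFL ▸ hcrit)
  have hexp : exp s = p₁ / p₂ := by
    rw [div_eq_zero_iff, sub_eq_zero] at hd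
    rw [eq_div_iff hp₂.ne', mul_comm]
    exact hd.resolve_right (by positivity)
  rw [← hexp, log_exp]

theorem stmt_3 (p r : ℕ) (hp : 0 < p) (hr : 0 < r)
    (x : Fin p → ℝ) (hx : x ≠ 0)
    (v : Fin r → ℝ) (hv : v ≠ 0)
    (p₁ p₂ : ℝ) (hp₁ : 0 < p₁) (hp₂ : 0 < p₂)
    (F : Matrix (Fin p) (Fin r) ℝ → ℝ)
    (hF : F = fun W => p₁ * Real.log (1 + Real.exp (-(v ⬝ᵥ (Wᵀ *ᵥ x)))) +
                       p₂ * Real.log (1 + Real.exp (v ⬝ᵥ (Wᵀ *ᵥ x))))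
    (What : Matrix (Fin p) (Fin r) ℝ)
    (hcrit : fderiv ℝ F What = 0) :
    Real.log (p₁ / p₂) = v ⬝ᵥ (Whatᵀ *ᵥ x) :=
  stmt_3_general p r x hx v hv p₁ p₂ hp₂ F hF What hcrit
end

section
/- Let p be a positive natural number, let x ∈ ℝ^p with x ≠ 0, let π ∈ (0,1), and let p₁, p₂ > 0. Define g : ℝ^p → ℝ by g(γ) = π · p₁ · log(1 + exp(−(1−π)⟨γ, x⟩)) + (1−π) · p₂ · log(1 + exp(π⟨γ, x⟩)), where ⟨·,·⟩ is the Euclidean inner product. If γ̂ ∈ ℝ^p is a critical point of g (i.e., the Fréchet derivative of g at γ̂ is zero; in particular if γ̂ minimizes g), then log(p₁/p₂) = ⟨γ̂, x⟩ + log((1 + exp(−(1−π)⟨γ̂, x⟩))/(1 + exp(π⟨γ̂, x⟩))). -/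
open scoped RealInnerProductSpace

lemma hd_logexp (a t : ℝ) :
    HasDerivAt (fun s => Real.log (1 + Real.exp (a * s)))
      (a * Real.exp (a * t) / (1 + Real.exp (a * t))) t := by
  have h1 : HasDerivAt (fun s : ℝ => a * s) a t := by
    simpa using (hasDerivAt_id t).const_mul a
  have h3 : HasDerivAt (fun s => 1 + Real.exp (a * s)) (Real.exp (a * t) * a) t :=
    h1.exp.const_add 1
  have hne : (1 : ℝ) + Real.exp (a * t) ≠ 0 := by positivity
  have := h3.log hne
  convert this using 1
  ring

theorem stmt_4 (p : ℕ) (hp : 0 < p)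
    (x : EuclideanSpace ℝ (Fin p)) (hx : x ≠ 0)
    (π : ℝ) (hπ₀ : 0 < π) (hπ₁ : π < 1)
    (p₁ p₂ : ℝ) (hp₁ : 0 < p₁) (hp₂ : 0 < p₂)
    (g : EuclideanSpace ℝ (Fin p) → ℝ)
    (hg : g = fun γ => π * p₁ * Real.log (1 + Real.exp (-((1 - π) * ⟪γ, x⟫))) +
                       (1 - π) * p₂ * Real.log (1 + Real.exp (π * ⟪γ, x⟫)))
    (γhat : EuclideanSpace ℝ (Fin p))
    (hcrit : fderiv ℝ g γhat = 0) :
    Real.log (p₁ / p₂) =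
      ⟪γhat, x⟫ + Real.log ((1 + Real.exp (-((1 - π) * ⟪γhat, x⟫))) /
                            (1 + Real.exp (π * ⟪γhat, x⟫))) := by
  set t := ⟪γhat, x⟫ with ht
  set A := Real.exp (-((1 - π) * t)) with hA
  set B := Real.exp (π * t) with hB
  have hApos : 0 < A := Real.exp_pos _
  have hBpos : 0 < B := Real.exp_pos _
  have h1A : (0:ℝ) < 1 + A := by positivity
  have h1B : (0:ℝ) < 1 + B := by positivity
  set h : ℝ → ℝ := fun s => π * p₁ * Real.log (1 + Real.exp (-(1 - π) * s)) +
       (1 - π) * p₂ * Real.log (1 + Real.exp (π * s)) with hh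
  set D : ℝ := π * p₁ * ((-(1 - π)) * Real.exp (-(1 - π) * t) / (1 + Real.exp (-(1 - π) * t))) +
      (1 - π) * p₂ * (π * Real.exp (π * t) / (1 + Real.exp (π * t))) with hD
  have hdh : HasDerivAt h D t :=
    ((hd_logexp (-(1-π)) t).const_mul (π * p₁)).add ((hd_logexp π t).const_mul ((1-π) * p₂))
  have hdf : HasFDerivAt (fun γ : EuclideanSpace ℝ (Fin p) => ⟪γ, x⟫)
      (innerSL ℝ x) γhat := by
    have heq : (fun γ : EuclideanSpace ℝ (Fin p) => ⟪γ, x⟫) = fun γ => (innerSL ℝ x) γ := by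
      funext γ
      exact real_inner_comm x γ
    rw [heq]
    exact (innerSL ℝ x).hasFDerivAt
  have hg' : HasFDerivAt g (D • innerSL ℝ x) γhat := by
    have hc := hdh.comp_hasFDerivAt γhat hdf
    have heq : g = h ∘ fun γ : EuclideanSpace ℝ (Fin p) => ⟪γ, x⟫ := by
      funext γ
      simp only [hg, hh, Function.comp_apply, neg_mul]
    rw [heq]
    exact hc
  have h0 : (D • innerSL ℝ x : EuclideanSpace ℝ (Fin p) →L[ℝ] ℝ) = 0 := by
    rw [← hg'.fderiv, hcrit]
  have hDx : D * ⟪x, x⟫ = 0 := by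
    have := congrFun (congrArg DFunLike.coe h0) x
    simpa using this
  have hxx : ⟪x, x⟫ ≠ 0 := by
    rw [real_inner_self_eq_norm_sq]
    exact pow_ne_zero 2 (norm_ne_zero_iff.mpr hx)
  have hD0 : D = 0 := by
    rcases mul_eq_zero.mp hDx with h' | h'
    · exact h'
    · exact absurd h' hxx
  have hAeq : Real.exp (-(1 - π) * t) = A := by rw [hA]; ring_nf
  rw [hD, hAeq, ← hB] at hD0
  have hπ1 : (0:ℝ) < 1 - π := by linarith
  have hden : (1:ℝ) + A ≠ 0 := ne_of_gt h1A
  have hden' : (1:ℝ) + B ≠ 0 := ne_of_gt h1B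
  field_simp at hD0
  have hkey : p₁ * A * (1 + B) = p₂ * B * (1 + A) := by
    have h2 : π * (1 - π) * (p₂ * B * (1 + A) - p₁ * A * (1 + B)) = 0 := by
      linear_combination hD0
    have h3 : p₂ * B * (1 + A) - p₁ * A * (1 + B) = 0 := by
      have hπne : π * (1 - π) ≠ 0 := by positivity
      exact (mul_eq_zero.mp h2).resolve_left hπne
    linarith
  have hratio : p₁ / p₂ = (B / A) * ((1 + A) / (1 + B)) := by
    field_simp
    linear_combination hkey
  rw [hratio, Real.log_mul (by positivity) (by positivity),
    Real.log_div (ne_of_gt hBpos) (ne_of_gt hApos), hA, hB, Real.log_exp, Real.log_exp]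
  ring
end

section
/- Let p, r be positive natural numbers, let x ∈ ℝ^p with x ≠ 0, let v ∈ ℝ^r with v ≠ 0, let π ∈ (0,1), and let p₁, p₂ > 0. Define F : Matrix (Fin p) (Fin r) ℝ → ℝ by F(W) = π · p₁ · log(1 + exp(−(1−π)⟨v, Wᵀx⟩)) + (1−π) · p₂ · log(1 + exp(π⟨v, Wᵀx⟩)), where ⟨·,·⟩ is the Euclidean inner product on ℝ^r and Wᵀx denotes the matrix-vector product of the transpose of W with x. If Ŵ is a critical point of F (i.e., the Fréchet derivative of F at Ŵ is zero; in particular if Ŵ minimizes F), then log(p₁/p₂) = ⟨v, Ŵᵀx⟩ + log((1 + exp(−(1−π)⟨v, Ŵᵀx⟩))/(1 + exp(π⟨v, Ŵᵀx⟩))). -/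
set_option maxHeartbeats 1000000


open Matrix

attribute [local instance] Matrix.normedAddCommGroup Matrix.normedSpace

theorem stmt_6 (p r : ℕ) (hp : 0 < p) (hr : 0 < r)
    (x : Fin p → ℝ) (hx : x ≠ 0)
    (v : Fin r → ℝ) (hv : v ≠ 0)
    (π : ℝ) (hπ₀ : 0 < π) (hπ₁ : π < 1)
    (p₁ p₂ : ℝ) (hp₁ : 0 < p₁) (hp₂ : 0 < p₂)
    (F : Matrix (Fin p) (Fin r) ℝ → ℝ)
    (hF : F = fun W => π * p₁ * Real.log (1 + Real.exp (-((1 - π) * (v ⬝ᵥ (Wᵀ *ᵥ x))))) +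
                       (1 - π) * p₂ * Real.log (1 + Real.exp (π * (v ⬝ᵥ (Wᵀ *ᵥ x)))))
    (What : Matrix (Fin p) (Fin r) ℝ)
    (hcrit : fderiv ℝ F What = 0) :
    Real.log (p₁ / p₂) =
      v ⬝ᵥ (Whatᵀ *ᵥ x) +
        Real.log ((1 + Real.exp (-((1 - π) * (v ⬝ᵥ (Whatᵀ *ᵥ x))))) /
                  (1 + Real.exp (π * (v ⬝ᵥ (Whatᵀ *ᵥ x))))) := by
  classical
  -- The linear functional L W = v ⬝ᵥ (Wᵀ *ᵥ x)
  set L : Matrix (Fin p) (Fin r) ℝ →ₗ[ℝ] ℝ :=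
    { toFun := fun W => v ⬝ᵥ (Wᵀ *ᵥ x)
      map_add' := by
        intro W₁ W₂
        simp [Matrix.transpose_add, Matrix.add_mulVec, dotProduct_add]
      map_smul' := by
        intro c W
        simp [Matrix.transpose_smul, Matrix.smul_mulVec] } with hL
  set Lc : Matrix (Fin p) (Fin r) ℝ →L[ℝ] ℝ := L.toContinuousLinearMap with hLc
  set t : ℝ := v ⬝ᵥ (Whatᵀ *ᵥ x) with ht
  set A : ℝ := Real.exp (-((1 - π) * t)) with hA
  set B : ℝ := Real.exp (π * t) with hB
  have hApos : 0 < A := Real.exp_pos _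
  have hBpos : 0 < B := Real.exp_pos _
  have h1A : (0:ℝ) < 1 + A := by linarith
  have h1B : (0:ℝ) < 1 + B := by linarith
  -- the scalar function g
  set g : ℝ → ℝ := fun s => π * p₁ * Real.log (1 + Real.exp (-((1 - π) * s))) +
      (1 - π) * p₂ * Real.log (1 + Real.exp (π * s)) with hg
  set g' : ℝ := π * p₁ * ((A * -((1 - π) * 1)) / (1 + A)) +
      (1 - π) * p₂ * ((B * (π * 1)) / (1 + B)) with hg'
  have hgd : HasDerivAt g g' t := by
    have h1 : HasDerivAt (fun s : ℝ => Real.log (1 + Real.exp (-((1 - π) * s))))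
        ((A * -((1 - π) * 1)) / (1 + A)) t := by
      have := ((((hasDerivAt_id t).const_mul (1 - π)).neg).exp.const_add 1).log (by
        have : (0:ℝ) < 1 + Real.exp (-((1 - π) * t)) := by positivity
        exact ne_of_gt this)
      simpa [hA, mul_comm] using this
    have h2 : HasDerivAt (fun s : ℝ => Real.log (1 + Real.exp (π * s)))
        ((B * (π * 1)) / (1 + B)) t := by
      have := (((hasDerivAt_id t).const_mul π).exp.const_add 1).log (by
        have : (0:ℝ) < 1 + Real.exp (π * t) := by positivity
        exact ne_of_gt this)
      simpa [hB, mul_comm] using this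
    exact (h1.const_mul (π * p₁)).add (h2.const_mul ((1 - π) * p₂))
  have hFd : HasFDerivAt F (g' • Lc) What := by
    rw [hF]
    exact hgd.comp_hasFDerivAt What Lc.hasFDerivAt
  have hfder : (g' • Lc : Matrix (Fin p) (Fin r) ℝ →L[ℝ] ℝ) = 0 := by
    rw [← hFd.fderiv, hcrit]
  -- evaluate at the matrix E with L E = 1
  have hx2 : 0 < x ⬝ᵥ x := by
    have h0 : 0 ≤ x ⬝ᵥ x := Finset.sum_nonneg fun i _ => mul_self_nonneg _
    exact h0.lt_of_ne fun h => hx (dotProduct_self_eq_zero.mp h.symm)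
  have hv2 : 0 < v ⬝ᵥ v := by
    have h0 : 0 ≤ v ⬝ᵥ v := Finset.sum_nonneg fun i _ => mul_self_nonneg _
    exact h0.lt_of_ne fun h => hv (dotProduct_self_eq_zero.mp h.symm)
  -- a direction E with L E = 1
  set E : Matrix (Fin p) (Fin r) ℝ :=
      ((x ⬝ᵥ x) * (v ⬝ᵥ v))⁻¹ • (Matrix.of fun i j => x i * v j) with hE
  have hLE : Lc E = 1 := by
    show v ⬝ᵥ (Eᵀ *ᵥ x) = 1
    have hcalc : v ⬝ᵥ (Eᵀ *ᵥ x)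
        = ((x ⬝ᵥ x) * (v ⬝ᵥ v))⁻¹ * ((v ⬝ᵥ v) * (x ⬝ᵥ x)) := by
      simp only [hE, Matrix.transpose_smul, Matrix.smul_mulVec, dotProduct_smul,
        smul_eq_mul]
      congr 1
      simp only [Matrix.mulVec, dotProduct, Matrix.transpose_apply, Matrix.of_apply,
        Finset.mul_sum, Finset.sum_mul]
      rw [Finset.sum_comm]
      exact Finset.sum_congr rfl fun i _ => Finset.sum_congr rfl fun j _ => by ring
    rw [hcalc, inv_mul_eq_div, div_eq_one_iff_eq (by positivity)]
    ring
  have hg0 : g' = 0 := by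
    have h := congrArg (fun (f : Matrix (Fin p) (Fin r) ℝ →L[ℝ] ℝ) => f E) hfder
    simpa [hLE] using h
  -- key algebraic identity
  have key : p₁ * A * (1 + B) = p₂ * B * (1 + A) := by
    rw [hg'] at hg0
    have h1Ane : (1 + A) ≠ 0 := ne_of_gt h1A
    have h1Bne : (1 + B) ≠ 0 := ne_of_gt h1B
    field_simp at hg0
    nlinarith [hg0, mul_pos hπ₀ (sub_pos.mpr hπ₁), sq_nonneg (π - 1)]
  have hBA : B = Real.exp t * A := by
    rw [hA, hB, ← Real.exp_add]
    congr 1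
    ring
  have hratio : p₁ / p₂ = Real.exp t * ((1 + A) / (1 + B)) := by
    have h2 : A * (p₁ * (1 + B)) = A * (Real.exp t * (1 + A) * p₂) := by
      calc A * (p₁ * (1 + B)) = p₁ * A * (1 + B) := by ring
        _ = p₂ * B * (1 + A) := key
        _ = A * (Real.exp t * (1 + A) * p₂) := by rw [hBA]; ring
    have h3 : p₁ * (1 + B) = Real.exp t * (1 + A) * p₂ :=
      mul_left_cancel₀ (ne_of_gt hApos) h2
    rw [div_eq_iff (ne_of_gt hp₂)]
    field_simp
    linarith [h3]
  calc Real.log (p₁ / p₂) = Real.log (Real.exp t * ((1 + A) / (1 + B))) := by rw [hratio]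
    _ = t + Real.log ((1 + A) / (1 + B)) := by
        rw [Real.log_mul (Real.exp_ne_zero t) (by positivity), Real.log_exp]
end

section
/- Let y be a real number with 0 ≤ y ≤ 1. Then for all real numbers θ and ϑ, y · log(1 + exp(−θ)) ≤ y · log(1 + exp(−ϑ)) − y · (exp(−ϑ)/(1 + exp(−ϑ))) · (θ − ϑ) + (1/8)(θ − ϑ)², with equality when θ = ϑ. -/
/-! The derivative of `t ↦ log (1 + exp (-t))` is `sigmoid t - 1`, and `sigmoid' = sigmoid (1 - sigmoid) ≤ 1/4`,
so the derivative is `1/4`-Lipschitz. A function with `L`-Lipschitz derivative lies below its tangent line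
plus `(L / 2) (θ - ϑ)²`, and multiplying by `y ∈ [0, 1]` keeps the quadratic term below `(1/8) (θ - ϑ)²`. -/

open Real
open scoped NNReal

theorem le_add_deriv_mul_add_sq_of_lipschitzWith_of_le {f f' : ℝ → ℝ} {L : ℝ≥0}
    (hf : ∀ x, HasDerivAt f (f' x) x) (hL : LipschitzWith L f') {a b : ℝ} (hab : a ≤ b) :
    f b ≤ f a + f' a * (b - a) + L / 2 * (b - a) ^ 2 := by
  set g : ℝ → ℝ := fun x => f a + f' a * (x - a) + L / 2 * (x - a) ^ 2 - f x
  have hg : ∀ x, HasDerivAt g (f' a + L * (x - a) - f' x) x := fun x => by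
    have hsq : HasDerivAt (fun x => (x - a) ^ 2) (2 * (x - a)) x := by
      simpa using ((hasDerivAt_id' x).sub_const a).fun_pow 2
    exact (((((hasDerivAt_id' x).sub_const a).const_mul (f' a)).const_add (f a)).add
      (hsq.const_mul ((L : ℝ) / 2))).sub (hf x) |>.congr_deriv (by ring)
  have hmono : MonotoneOn g (Set.Ici a) := by
    refine monotoneOn_of_hasDerivWithinAt_nonneg (convex_Ici a)
      (fun x _ => (hg x).continuousAt.continuousWithinAt)
      (fun x _ => (hg x).hasDerivWithinAt) fun x hx => ?_
    rw [interior_Ici] at hx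
    have hlip : |f' x - f' a| ≤ L * |x - a| := by
      simpa only [Real.dist_eq] using hL.dist_le_mul x a
    rw [abs_of_nonneg (sub_nonneg.mpr (Set.mem_Ioi.mp hx).le)] at hlip
    linarith [le_abs_self (f' x - f' a)]
  have hgb := hmono Set.self_mem_Ici hab hab
  simp only [g] at hgb
  linarith

theorem le_add_deriv_mul_add_sq_of_lipschitzWith {f f' : ℝ → ℝ} {L : ℝ≥0}
    (hf : ∀ x, HasDerivAt f (f' x) x) (hL : LipschitzWith L f') (a b : ℝ) :
    f b ≤ f a + f' a * (b - a) + L / 2 * (b - a) ^ 2 := by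
  rcases le_total a b with hab | hba
  · exact le_add_deriv_mul_add_sq_of_lipschitzWith_of_le hf hL hab
  · have hf_neg : ∀ x, HasDerivAt (fun x => f (-x)) (-f' (-x)) x := fun x => by
      simpa [Function.comp_def] using (hf (-x)).comp x (hasDerivAt_neg x)
    have hL_neg : LipschitzWith L (fun x => -f' (-x)) := by
      rw [← mul_one L]
      exact (hL.comp LipschitzWith.id.neg).neg
    have := le_add_deriv_mul_add_sq_of_lipschitzWith_of_le hf_neg hL_neg (neg_le_neg hba)
    simp only [neg_neg] at this
    linarith

theorem Real.lipschitzWith_sigmoid : LipschitzWith 4⁻¹ sigmoid := by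
  refine lipschitzWith_of_nnnorm_deriv_le differentiable_sigmoid fun x => ?_
  rw [← NNReal.coe_le_coe, coe_nnnorm, deriv_sigmoid, Real.norm_of_nonneg
    (mul_nonneg (sigmoid_nonneg x) (sub_nonneg.mpr (sigmoid_le_one x)))]
  push_cast
  nlinarith [sq_nonneg (sigmoid x - 2⁻¹)]

theorem Real.exp_neg_div_one_add_exp_neg (x : ℝ) : exp (-x) / (1 + exp (-x)) = 1 - sigmoid x := by
  rw [← sigmoid_neg, ← sigmoid_mul_rexp_neg, sigmoid_def, div_eq_inv_mul]

theorem Real.hasDerivAt_log_one_add_exp_neg (x : ℝ) :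
    HasDerivAt (fun t => log (1 + exp (-t))) (sigmoid x - 1) x := by
  have h := (((hasDerivAt_neg x).exp).const_add 1).log (by positivity)
  convert h using 1
  rw [← neg_sub, ← exp_neg_div_one_add_exp_neg]
  ring

theorem Real.log_one_add_exp_neg_le (θ ϑ : ℝ) :
    log (1 + exp (-θ)) ≤
      log (1 + exp (-ϑ)) + (sigmoid ϑ - 1) * (θ - ϑ) + 1 / 8 * (θ - ϑ) ^ 2 := by
  have hL : LipschitzWith 4⁻¹ fun x => sigmoid x - 1 := by
    simpa using lipschitzWith_sigmoid.sub (LipschitzWith.const (1 : ℝ))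
  have h := le_add_deriv_mul_add_sq_of_lipschitzWith hasDerivAt_log_one_add_exp_neg hL ϑ θ
  norm_num at h
  linarith

theorem stmt_9 (y : ℝ) (hy0 : 0 ≤ y) (hy1 : y ≤ 1) (θ ϑ : ℝ) :
    y * Real.log (1 + Real.exp (-θ)) ≤
      y * Real.log (1 + Real.exp (-ϑ)) -
        y * (Real.exp (-ϑ) / (1 + Real.exp (-ϑ))) * (θ - ϑ) +
        (1 / 8) * (θ - ϑ) ^ 2 ∧
    (θ = ϑ →
      y * Real.log (1 + Real.exp (-θ)) =
        y * Real.log (1 + Real.exp (-ϑ)) -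
          y * (Real.exp (-ϑ) / (1 + Real.exp (-ϑ))) * (θ - ϑ) +
          (1 / 8) * (θ - ϑ) ^ 2) := by
  refine ⟨?_, by rintro rfl; ring⟩
  have h := mul_le_mul_of_nonneg_left (log_one_add_exp_neg_le θ ϑ) hy0
  have hsq : y * (θ - ϑ) ^ 2 ≤ (θ - ϑ) ^ 2 := mul_le_of_le_one_left (sq_nonneg _) hy1
  rw [exp_neg_div_one_add_exp_neg]
  linarith
end

section
/- Let n, m, p, r be positive natural numbers. Let Y be an n × m real matrix with all entries in {0,1}, let X be an n × p real matrix, let t ∈ ℝ^n with t_i ∈ {−1, 1} for all i, let π ∈ ℝ^n with 0 < π_i < 1 for all i, set q_i = (t_i + 1)/2 − π_i, and let Q = diag(q). For V an m × r real matrix and W a p × r real matrix define L_A(V, W) = Σ_{i=1}^n Σ_{j=1}^m Y_{ij} · log(1 + exp(−(Q X W Vᵀ)_{ij})). Fix supporting matrices V⁰ (m × r) and W⁰ (p × r), let Φ† be the n × m matrix with Φ†_{ij} = exp(−(Q X W⁰ V⁰ᵀ)_{ij}) / (1 + exp(−(Q X W⁰ V⁰ᵀ)_{ij})), and set Z† =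 Q X W⁰ V⁰ᵀ + 4 (Y ⊙ Φ†), where ⊙ is the entrywise (Hadamard) product. Then for all m × r matrices V and p × r matrices W: L_A(V, W) − L_A(V⁰, W⁰) ≤ (1/8) · ( Σ_{i,j} (Z† − Q X W Vᵀ)_{ij}² − Σ_{i,j} (Z† − Q X W⁰ V⁰ᵀ)_{ij}² ). -/
/-!
Write `ℓ x = log (1 + exp (-x))`. Then `ℓ' = σ - 1` with `σ` the sigmoid, and
`ℓ'' = σ (1 - σ) ≤ 1/4`, so `x ^ 2 / 8 - ℓ x` is convex and `ℓ` lies below its tangent parabola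
`ℓ x₀ + ℓ' x₀ (x - x₀) + (x - x₀) ^ 2 / 8`. Since `Φ = 1 - σ x₀ = -ℓ' x₀` entrywise, multiplying
this bound by `Y i j ∈ [0, 1]` and completing the square gives the majorization entry by entry;
summing over the entries gives the theorem.
-/

open Matrix

theorem ConvexOn.add_mul_sub_le_of_hasDerivAt {g : ℝ → ℝ} {g' x : ℝ}
    (hg : ConvexOn ℝ Set.univ g) (hd : HasDerivAt g g' x) (y : ℝ) :
    g x + g' * (y - x) ≤ g y := by
  rcases lt_trichotomy x y with hxy | rfl | hxy
  · have := hg.le_slope_of_hasDerivAt trivial trivial hxy hd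
    rw [slope_def_field, le_div_iff₀ (sub_pos.2 hxy)] at this
    linarith
  · simp
  · have := hg.slope_le_of_hasDerivAt trivial trivial hxy hd
    rw [slope_def_field, div_le_iff₀ (sub_pos.2 hxy)] at this
    linarith

theorem le_add_mul_sub_add_sq_of_monotone {f f' : ℝ → ℝ} {K : ℝ}
    (hf : ∀ x, HasDerivAt f (f' x) x) (hK : Monotone fun x => K * x - f' x) (x y : ℝ) :
    f y ≤ f x + f' x * (y - x) + K / 2 * (y - x) ^ 2 := by
  set g : ℝ → ℝ := fun z => K / 2 * z ^ 2 - f z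
  have hg (z : ℝ) : HasDerivAt g (K * z - f' z) z :=
    (((hasDerivAt_pow 2 z).const_mul (K / 2)).sub (hf z)).congr_deriv (by ring)
  have hg' : deriv g = fun z => K * z - f' z := funext fun z => (hg z).deriv
  have hconvex : ConvexOn ℝ Set.univ g :=
    Monotone.convexOn_univ_of_deriv (fun z => (hg z).differentiableAt) (hg' ▸ hK)
  linear_combination hconvex.add_mul_sub_le_of_hasDerivAt (hg x) y

namespace Real

theorem hasDerivAt_log_one_add_exp_neg_s13 (x : ℝ) :
    HasDerivAt (fun x => log (1 + exp (-x))) (sigmoid x - 1) x := by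
  convert ((hasDerivAt_neg' x).exp.const_add 1).log (by positivity) using 1
  rw [sigmoid_def]
  field_simp
  ring

theorem monotone_div_four_sub_sigmoid : Monotone fun x => x / 4 - sigmoid x := by
  refine monotone_of_hasDerivAt_nonneg
    (fun x => ((hasDerivAt_id x).div_const 4).sub (hasDerivAt_sigmoid x)) fun x => ?_
  rw [Pi.zero_apply]
  nlinarith [sq_nonneg (2 * sigmoid x - 1)]

theorem log_one_add_exp_neg_le_s13 (x₀ x : ℝ) :
    log (1 + exp (-x)) ≤
      log (1 + exp (-x₀)) + (sigmoid x₀ - 1) * (x - x₀) + (x - x₀) ^ 2 / 8 := by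
  have hK : Monotone fun x => 1 / 4 * x - (sigmoid x - 1) := fun a b hab => by
    have := monotone_div_four_sub_sigmoid hab
    simp only at this ⊢
    linarith
  linear_combination le_add_mul_sub_add_sq_of_monotone hasDerivAt_log_one_add_exp_neg_s13 hK x₀ x

theorem exp_neg_div_one_add_exp_neg_s13 (x : ℝ) : exp (-x) / (1 + exp (-x)) = 1 - sigmoid x := by
  rw [← sigmoid_neg, ← sigmoid_mul_rexp_neg, sigmoid_def, div_eq_mul_inv, mul_comm]

theorem mul_log_one_add_exp_neg_sub_le {y : ℝ} (hy₀ : 0 ≤ y) (hy₁ : y ≤ 1) (x₀ x : ℝ) :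
    y * (log (1 + exp (-x)) - log (1 + exp (-x₀))) ≤
      1 / 8 * ((x₀ + 4 * (y * (exp (-x₀) / (1 + exp (-x₀)))) - x) ^ 2 -
        (4 * (y * (exp (-x₀) / (1 + exp (-x₀))))) ^ 2) := by
  rw [exp_neg_div_one_add_exp_neg_s13]
  have := mul_le_mul_of_nonneg_left (log_one_add_exp_neg_le_s13 x₀ x) hy₀
  nlinarith [mul_nonneg (sub_nonneg.2 hy₁) (sq_nonneg (x - x₀))]

end Real

theorem stmt_13_general (n m p r : ℕ)
    (Y : Matrix (Fin n) (Fin m) ℝ) (hY : ∀ i j, Y i j = 0 ∨ Y i j = 1)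
    (X : Matrix (Fin n) (Fin p) ℝ)
    (Q : Matrix (Fin n) (Fin n) ℝ)
    (LA : Matrix (Fin m) (Fin r) ℝ → Matrix (Fin p) (Fin r) ℝ → ℝ)
    (hLA : LA = fun V W =>
      ∑ i, ∑ j, Y i j * Real.log (1 + Real.exp (-((Q * X * W * Vᵀ) i j))))
    (V₀ : Matrix (Fin m) (Fin r) ℝ) (W₀ : Matrix (Fin p) (Fin r) ℝ)
    (Φ : Matrix (Fin n) (Fin m) ℝ)
    (hΦ : ∀ i j, Φ i j = Real.exp (-((Q * X * W₀ * V₀ᵀ) i j)) /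
                          (1 + Real.exp (-((Q * X * W₀ * V₀ᵀ) i j))))
    (Z : Matrix (Fin n) (Fin m) ℝ)
    (hZ : Z = Q * X * W₀ * V₀ᵀ + 4 • (Y ⊙ Φ)) :
    ∀ (V : Matrix (Fin m) (Fin r) ℝ) (W : Matrix (Fin p) (Fin r) ℝ),
      LA V W - LA V₀ W₀ ≤
        (1 / 8) * ((∑ i, ∑ j, ((Z - Q * X * W * Vᵀ) i j) ^ 2) -
                   (∑ i, ∑ j, ((Z - Q * X * W₀ * V₀ᵀ) i j) ^ 2)) := by
  intro V W
  subst hLA hZ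
  simp only [← Finset.sum_sub_distrib, Finset.mul_sum]
  refine Finset.sum_le_sum fun i _ => Finset.sum_le_sum fun j _ => ?_
  have hY₀₁ : 0 ≤ Y i j ∧ Y i j ≤ 1 := by rcases hY i j with h | h <;> norm_num [h]
  simp only [← mul_sub, Matrix.sub_apply, Matrix.add_apply, Matrix.smul_apply, hadamard_apply,
    nsmul_eq_mul, Nat.cast_ofNat, add_sub_cancel_left, hΦ]
  exact Real.mul_log_one_add_exp_neg_sub_le hY₀₁.1 hY₀₁.2 _ _

theorem stmt_13 (n m p r : ℕ) (hn : 0 < n) (hm : 0 < m) (hp : 0 < p) (hr : 0 < r)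
    (Y : Matrix (Fin n) (Fin m) ℝ) (hY : ∀ i j, Y i j = 0 ∨ Y i j = 1)
    (X : Matrix (Fin n) (Fin p) ℝ)
    (t : Fin n → ℝ) (ht : ∀ i, t i = -1 ∨ t i = 1)
    (π : Fin n → ℝ) (hπ : ∀ i, 0 < π i ∧ π i < 1)
    (q : Fin n → ℝ) (hq : ∀ i, q i = (t i + 1) / 2 - π i)
    (Q : Matrix (Fin n) (Fin n) ℝ) (hQ : Q = Matrix.diagonal q)
    (LA : Matrix (Fin m) (Fin r) ℝ → Matrix (Fin p) (Fin r) ℝ → ℝ)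
    (hLA : LA = fun V W =>
      ∑ i, ∑ j, Y i j * Real.log (1 + Real.exp (-((Q * X * W * Vᵀ) i j))))
    (V₀ : Matrix (Fin m) (Fin r) ℝ) (W₀ : Matrix (Fin p) (Fin r) ℝ)
    (Φ : Matrix (Fin n) (Fin m) ℝ)
    (hΦ : ∀ i j, Φ i j = Real.exp (-((Q * X * W₀ * V₀ᵀ) i j)) /
                          (1 + Real.exp (-((Q * X * W₀ * V₀ᵀ) i j))))
    (Z : Matrix (Fin n) (Fin m) ℝ)
    (hZ : Z = Q * X * W₀ * V₀ᵀ + 4 • (Y ⊙ Φ)) :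
    ∀ (V : Matrix (Fin m) (Fin r) ℝ) (W : Matrix (Fin p) (Fin r) ℝ),
      LA V W - LA V₀ W₀ ≤
        (1 / 8) * ((∑ i, ∑ j, ((Z - Q * X * W * Vᵀ) i j) ^ 2) -
                   (∑ i, ∑ j, ((Z - Q * X * W₀ * V₀ᵀ) i j) ^ 2)) :=
  stmt_13_general n m p r Y hY X Q LA hLA V₀ W₀ Φ hΦ Z hZ
end

section
/- Let n, m, p, r be positive natural numbers with r ≤ m. Let Z be an n × m real matrix, X an n × p real matrix, W a p × r real matrix, t ∈ ℝ^n with t_i ∈ {−1,1} for all i and T = diag(t), and a ∈ ℝ^n with a_i > 0 for all i and A = diag(a); let A^{1/2} = diag(√a₁, …, √a_n). Suppose 2 Zᵀ A T X W = K Λ Lᵀ, where K is an m × r real matrix with Kᵀ K = I_r, L is an r × r real orthogonal matrix, and Λ = diag(λ₁, …, λ_r) with λ_k ≥ 0 for all k. Set V̂ = K Lᵀ. Then for every m × r real matrix V with Vᵀ V = I_r: ‖A^{1/2} Z − A^{1/2} T X W V̂ᵀ‖_F² ≤ ‖A^{1/2} Z − A^{1/2} T X W Vᵀ‖_F², where ‖M‖_F²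 = trace(Mᵀ M) is the squared Frobenius norm. -/
open Matrix

theorem stmt_15 (n m p r : ℕ) (hn : 0 < n) (hm : 0 < m) (hp : 0 < p) (hr : 0 < r)
    (hrm : r ≤ m)
    (Z : Matrix (Fin n) (Fin m) ℝ)
    (X : Matrix (Fin n) (Fin p) ℝ)
    (W : Matrix (Fin p) (Fin r) ℝ)
    (t : Fin n → ℝ) (ht : ∀ i, t i = -1 ∨ t i = 1)
    (T : Matrix (Fin n) (Fin n) ℝ) (hT : T = Matrix.diagonal t)
    (a : Fin n → ℝ) (ha : ∀ i, 0 < a i)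
    (A : Matrix (Fin n) (Fin n) ℝ) (hA : A = Matrix.diagonal a)
    (Asqrt : Matrix (Fin n) (Fin n) ℝ)
    (hAsqrt : Asqrt = Matrix.diagonal fun i => Real.sqrt (a i))
    (K : Matrix (Fin m) (Fin r) ℝ)
    (L : Matrix (Fin r) (Fin r) ℝ)
    (lam : Fin r → ℝ) (hlam : ∀ k, 0 ≤ lam k)
    (hsvd : (2 : ℝ) • (Zᵀ * A * T * X * W) = K * Matrix.diagonal lam * Lᵀ)
    (hK : Kᵀ * K = 1)
    (hL1 : Lᵀ * L = 1) (hL2 : L * Lᵀ = 1)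
    (Vhat : Matrix (Fin m) (Fin r) ℝ) (hVhat : Vhat = K * Lᵀ) :
    ∀ V : Matrix (Fin m) (Fin r) ℝ, Vᵀ * V = 1 →
      ((Asqrt * Z - Asqrt * T * X * W * Vhatᵀ)ᵀ *
        (Asqrt * Z - Asqrt * T * X * W * Vhatᵀ)).trace ≤
      ((Asqrt * Z - Asqrt * T * X * W * Vᵀ)ᵀ *
        (Asqrt * Z - Asqrt * T * X * W * Vᵀ)).trace := by
  intro V hV
  set M1 := Asqrt * Z with hM1
  set S := Asqrt * T * X * W with hS
  -- Asqrt * Asqrt = A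
  have hAA : Asqrt * Asqrt = A := by
    rw [hAsqrt, hA, diagonal_mul_diagonal]
    have h : (fun i => Real.sqrt (a i) * Real.sqrt (a i)) = a :=
      funext fun i => Real.mul_self_sqrt (ha i).le
    rw [h]
  have hAsqT : Asqrtᵀ = Asqrt := by rw [hAsqrt]; exact diagonal_transpose _
  -- M1ᵀ * S = Zᵀ * A * T * X * W
  have hMS : M1ᵀ * S = Zᵀ * A * T * X * W := by
    rw [hM1, hS, transpose_mul, hAsqT]
    simp only [← Matrix.mul_assoc]
    rw [Matrix.mul_assoc Zᵀ Asqrt Asqrt, hAA]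
  -- trace expansion of the objective
  have expand : ∀ U : Matrix (Fin m) (Fin r) ℝ, Uᵀ * U = 1 →
      ((M1 - S * Uᵀ)ᵀ * (M1 - S * Uᵀ)).trace
        = (M1ᵀ * M1).trace + (Sᵀ * S).trace - 2 * (M1ᵀ * (S * Uᵀ)).trace := by
    intro U hU
    have h1 : (M1 - S * Uᵀ)ᵀ * (M1 - S * Uᵀ)
        = M1ᵀ * M1 - M1ᵀ * (S * Uᵀ)
          - ((S * Uᵀ)ᵀ * M1 - (S * Uᵀ)ᵀ * (S * Uᵀ)) := by
      rw [transpose_sub, Matrix.sub_mul, Matrix.mul_sub, Matrix.mul_sub]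
    rw [h1, trace_sub, trace_sub, trace_sub]
    have h2 : ((S * Uᵀ)ᵀ * M1).trace = (M1ᵀ * (S * Uᵀ)).trace := by
      rw [← trace_transpose ((S * Uᵀ)ᵀ * M1), transpose_mul, transpose_transpose]
    have h3 : ((S * Uᵀ)ᵀ * (S * Uᵀ)).trace = (Sᵀ * S).trace := by
      rw [transpose_mul, transpose_transpose, trace_mul_comm]
      have : S * Uᵀ * (U * Sᵀ) = S * Sᵀ := by
        rw [Matrix.mul_assoc, ← Matrix.mul_assoc Uᵀ U Sᵀ, hU, Matrix.one_mul]
      rw [this, trace_mul_comm]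
    rw [h2, h3]
    ring
  -- trace of diagonal times matrix
  have traceDiag : ∀ (M : Matrix (Fin r) (Fin r) ℝ),
      (Matrix.diagonal lam * M).trace = ∑ k, lam k * M k k := by
    intro M
    simp [Matrix.trace, Matrix.diag, Matrix.diagonal_mul]
  -- relate the cross term to the SVD matrix
  have hBV : ∀ U : Matrix (Fin m) (Fin r) ℝ,
      2 * (M1ᵀ * (S * Uᵀ)).trace = ((K * Matrix.diagonal lam * Lᵀ) * Uᵀ).trace := by
    intro U
    have h1 : M1ᵀ * (S * Uᵀ) = (Zᵀ * A * T * X * W) * Uᵀ := by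
      rw [← Matrix.mul_assoc, hMS]
    rw [h1, ← hsvd, Matrix.smul_mul, trace_smul, smul_eq_mul]
  -- rearrange trace(K Λ Lᵀ Uᵀ) = trace(Λ (Lᵀ Uᵀ K))
  have rearr : ∀ U : Matrix (Fin m) (Fin r) ℝ,
      ((K * Matrix.diagonal lam * Lᵀ) * Uᵀ).trace
        = (Matrix.diagonal lam * (Lᵀ * Uᵀ * K)).trace := by
    intro U
    have h : K * Matrix.diagonal lam * Lᵀ * Uᵀ = K * (Matrix.diagonal lam * (Lᵀ * Uᵀ)) := by
      rw [Matrix.mul_assoc (K * Matrix.diagonal lam) Lᵀ Uᵀ,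
        Matrix.mul_assoc K (Matrix.diagonal lam) (Lᵀ * Uᵀ)]
    rw [h, trace_mul_comm K (Matrix.diagonal lam * (Lᵀ * Uᵀ)),
      Matrix.mul_assoc (Matrix.diagonal lam) (Lᵀ * Uᵀ) K]
  -- value at Vhat : equals ∑ lam
  have hVhatval : ((K * Matrix.diagonal lam * Lᵀ) * Vhatᵀ).trace = ∑ k, lam k := by
    have hLVK : Lᵀ * Vhatᵀ * K = 1 := by
      rw [hVhat, transpose_mul, transpose_transpose, ← Matrix.mul_assoc, hL1,
        Matrix.one_mul, hK]
    rw [rearr, hLVK, Matrix.mul_one]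
    simp [Matrix.trace, Matrix.diag]
  -- bound at general V : at most ∑ lam
  have hVval : ((K * Matrix.diagonal lam * Lᵀ) * Vᵀ).trace ≤ ∑ k, lam k := by
    rw [rearr, traceDiag]
    apply Finset.sum_le_sum
    intro k _
    have hdiag : (Lᵀ * Vᵀ * K) k k = ∑ j, L j k * (Vᵀ * K) j k := by
      rw [Matrix.mul_assoc]
      simp [Matrix.mul_apply, Matrix.transpose_apply]
    -- column of L has unit norm
    have hLcol : ∑ j, (L j k)^2 = 1 := by
      have h := congrArg (fun M => M k k) hL1
      simp only [Matrix.mul_apply, Matrix.transpose_apply, Matrix.one_apply_eq] at h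
      simpa [sq] using h
    -- column of Vᵀ K has norm at most one
    have hGcol : ∑ j, ((Vᵀ * K) j k)^2 ≤ 1 := by
      set P : Matrix (Fin m) (Fin m) ℝ := 1 - V * Vᵀ with hPdef
      have hPsymm : Pᵀ = P := by
        rw [hPdef, transpose_sub, transpose_one, transpose_mul, transpose_transpose]
      have hVVV : V * Vᵀ * (V * Vᵀ) = V * Vᵀ := by
        rw [Matrix.mul_assoc, ← Matrix.mul_assoc Vᵀ V Vᵀ, hV, Matrix.one_mul]
      have hPP : P * P = P := by
        have h : (1 - V * Vᵀ) * (1 - V * Vᵀ)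
            = 1 - V * Vᵀ - V * Vᵀ + V * Vᵀ * (V * Vᵀ) := by noncomm_ring
        rw [hPdef, h, hVVV]
        abel
      have e1 : (P * K)ᵀ * (P * K) = Kᵀ * (P * K) := by
        rw [transpose_mul P K, hPsymm, Matrix.mul_assoc Kᵀ P (P * K),
          ← Matrix.mul_assoc P P K, hPP]
      have e2 : Kᵀ * (P * K) = 1 - (Vᵀ * K)ᵀ * (Vᵀ * K) := by
        rw [hPdef, Matrix.sub_mul, Matrix.one_mul, Matrix.mul_sub, hK,
          transpose_mul, transpose_transpose]
        congr 1
        rw [Matrix.mul_assoc V Vᵀ K, ← Matrix.mul_assoc Kᵀ V (Vᵀ * K)]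
      have hG : (Vᵀ * K)ᵀ * (Vᵀ * K) = 1 - (P * K)ᵀ * (P * K) := by
        rw [e1, e2, sub_sub_cancel]
      have h1 : ∑ j, ((Vᵀ * K) j k)^2 = ((Vᵀ * K)ᵀ * (Vᵀ * K)) k k := by
        simp [Matrix.mul_apply, sq, mul_comm]
      have h2 : (0:ℝ) ≤ ((P * K)ᵀ * (P * K)) k k := by
        have : ((P * K)ᵀ * (P * K)) k k = ∑ i, ((P * K) i k)^2 := by
          simp [Matrix.mul_apply, sq, mul_comm]
        rw [this]
        exact Finset.sum_nonneg fun i _ => sq_nonneg _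
      rw [h1, hG]
      simp only [Matrix.sub_apply, Matrix.one_apply_eq]
      linarith
    -- Cauchy-Schwarz
    have hCS := Finset.sum_mul_sq_le_sq_mul_sq Finset.univ
      (fun j => L j k) (fun j => (Vᵀ * K) j k)
    have hsq : ((Lᵀ * Vᵀ * K) k k)^2 ≤ 1 := by
      rw [hdiag]
      calc (∑ j, L j k * (Vᵀ * K) j k)^2
          ≤ (∑ j, (L j k)^2) * ∑ j, ((Vᵀ * K) j k)^2 := hCS
        _ ≤ 1 := by rw [hLcol, one_mul]; exact hGcol
    have hle1 : (Lᵀ * Vᵀ * K) k k ≤ 1 := by nlinarith [sq_nonneg ((Lᵀ * Vᵀ * K) k k - 1)]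
    calc lam k * (Lᵀ * Vᵀ * K) k k ≤ lam k * 1 :=
          mul_le_mul_of_nonneg_left hle1 (hlam k)
      _ = lam k := mul_one _
  -- Vhat is also semi-orthogonal
  have hVhatO : Vhatᵀ * Vhat = 1 := by
    rw [hVhat, transpose_mul, transpose_transpose, Matrix.mul_assoc,
      ← Matrix.mul_assoc Kᵀ K Lᵀ, hK, Matrix.one_mul, hL2]
  rw [expand V hV, expand Vhat hVhatO]
  have e1 := hBV V
  have e2 := hBV Vhat
  linarith
end

section
/- Let n, m, p, r be positive natural numbers. Let Z be an n × m real matrix, X an n × p real matrix, V an m × r real matrix with Vᵀ V = I_r, t ∈ ℝ^n with t_i ∈ {−1,1} for all i and T = diag(t), and a ∈ ℝ^n with a_i > 0 for all i and A = diag(a); let A^{1/2} = diag(√a₁, …, √a_n). Suppose the p × p matrix Xᵀ A X is invertible, and set Ŵ = (Xᵀ A X)^{-1} Xᵀ T A Z V. Then for every p × r real matrix W: ‖A^{1/2} Z − A^{1/2} T X Ŵ Vᵀ‖_F² ≤ ‖A^{1/2} Z − A^{1/2} T X W Vᵀ‖_F², where ‖M‖_F² = trace(Mᵀ M) is the squared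 Frobenius norm. -/
open Matrix

theorem stmt_16 (n m p r : ℕ) (hn : 0 < n) (hm : 0 < m) (hp : 0 < p) (hr : 0 < r)
    (Z : Matrix (Fin n) (Fin m) ℝ)
    (X : Matrix (Fin n) (Fin p) ℝ)
    (V : Matrix (Fin m) (Fin r) ℝ) (hV : Vᵀ * V = 1)
    (t : Fin n → ℝ) (ht : ∀ i, t i = -1 ∨ t i = 1)
    (T : Matrix (Fin n) (Fin n) ℝ) (hT : T = Matrix.diagonal t)
    (a : Fin n → ℝ) (ha : ∀ i, 0 < a i)
    (A : Matrix (Fin n) (Fin n) ℝ) (hA : A = Matrix.diagonal a)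
    (Asqrt : Matrix (Fin n) (Fin n) ℝ)
    (hAsqrt : Asqrt = Matrix.diagonal fun i => Real.sqrt (a i))
    (hinv : IsUnit (Xᵀ * A * X))
    (What : Matrix (Fin p) (Fin r) ℝ)
    (hWhat : What = (Xᵀ * A * X)⁻¹ * Xᵀ * T * A * Z * V) :
    ∀ W : Matrix (Fin p) (Fin r) ℝ,
      ((Asqrt * Z - Asqrt * T * X * What * Vᵀ)ᵀ *
        (Asqrt * Z - Asqrt * T * X * What * Vᵀ)).trace ≤
      ((Asqrt * Z - Asqrt * T * X * W * Vᵀ)ᵀ *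
        (Asqrt * Z - Asqrt * T * X * W * Vᵀ)).trace := by
  intro W
  have hTsymm : Tᵀ = T := by rw [hT, Matrix.diagonal_transpose]
  have hAssymm : Asqrtᵀ = Asqrt := by rw [hAsqrt, Matrix.diagonal_transpose]
  have hAsA : Asqrt * Asqrt = A := by
    rw [hAsqrt, hA, Matrix.diagonal_mul_diagonal]
    have h : (fun i => Real.sqrt (a i) * Real.sqrt (a i)) = a :=
      funext fun i => Real.mul_self_sqrt (ha i).le
    rw [h]
  have hTA : T * A = A * T := by
    rw [hT, hA, Matrix.diagonal_mul_diagonal, Matrix.diagonal_mul_diagonal]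
    have h : (fun i => t i * a i) = fun i => a i * t i := funext fun i => mul_comm _ _
    rw [h]
  have hTT : T * T = 1 := by
    rw [hT, Matrix.diagonal_mul_diagonal, ← Matrix.diagonal_one]
    have h : (fun i => t i * t i) = fun _ => (1 : ℝ) := by
      funext i; rcases ht i with h | h <;> rw [h] <;> norm_num
    rw [h]
  set C := Asqrt * T * X with hC
  set B := Asqrt * Z with hB
  have hCtC : Cᵀ * C = Xᵀ * A * X := by
    rw [hC]
    simp only [Matrix.transpose_mul, hTsymm, hAssymm, Matrix.mul_assoc]
    congr 1
    rw [← Matrix.mul_assoc Asqrt Asqrt, hAsA, ← Matrix.mul_assoc T A, hTA,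
      Matrix.mul_assoc A T, ← Matrix.mul_assoc T T, hTT, Matrix.one_mul]
  have hCtB : Cᵀ * B = Xᵀ * T * A * Z := by
    rw [hC, hB]
    simp only [Matrix.transpose_mul, hTsymm, hAssymm, Matrix.mul_assoc]
    congr 2
    rw [← Matrix.mul_assoc Asqrt Asqrt, hAsA]
  have hdet : IsUnit (Xᵀ * A * X).det := (Matrix.isUnit_iff_isUnit_det _).mp hinv
  have hNE : Cᵀ * C * What = Cᵀ * B * V := by
    rw [hCtC, hCtB, hWhat]
    simp only [← Matrix.mul_assoc]
    rw [Matrix.mul_nonsing_inv _ hdet, Matrix.one_mul]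
  set R := B - C * What * Vᵀ with hR
  set D := C * (What - W) * Vᵀ with hD
  have horth : Cᵀ * R * V = 0 := by
    rw [hR, Matrix.mul_sub, Matrix.sub_mul]
    have h1 : Cᵀ * (C * What * Vᵀ) * V = Cᵀ * C * What := by
      simp only [Matrix.mul_assoc, hV, Matrix.mul_one]
    rw [h1, hNE, sub_self]
  have hVRC : Vᵀ * Rᵀ * C = 0 := by
    have h := congrArg Matrix.transpose horth
    simpa [Matrix.transpose_mul, Matrix.mul_assoc] using h
  have hRD : (Rᵀ * D).trace = 0 := by
    have h1 : Rᵀ * D = (Rᵀ * C * (What - W)) * Vᵀ := by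
      rw [hD]; simp only [Matrix.mul_assoc]
    rw [h1, Matrix.trace_mul_comm]
    have h2 : Vᵀ * (Rᵀ * C * (What - W)) = (Vᵀ * Rᵀ * C) * (What - W) := by
      simp only [Matrix.mul_assoc]
    rw [h2, hVRC, Matrix.zero_mul, Matrix.trace_zero]
  have hDR : (Dᵀ * R).trace = 0 := by
    have h : Dᵀ * R = (Rᵀ * D)ᵀ := by
      rw [Matrix.transpose_mul Rᵀ D, Matrix.transpose_transpose]
    rw [h, Matrix.trace_transpose, hRD]
  have hDD : 0 ≤ (Dᵀ * D).trace := by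
    rw [Matrix.trace]
    apply Finset.sum_nonneg
    intro i _
    simp only [Matrix.diag_apply, Matrix.mul_apply, Matrix.transpose_apply]
    apply Finset.sum_nonneg
    intro k _
    exact mul_self_nonneg _
  have hdecomp : B - C * W * Vᵀ = R + D := by
    rw [hR, hD, Matrix.mul_sub, Matrix.sub_mul]
    abel
  rw [hdecomp]
  have hexp : (R + D)ᵀ * (R + D) = Rᵀ * R + Rᵀ * D + Dᵀ * R + Dᵀ * D := by
    rw [Matrix.transpose_add, Matrix.add_mul, Matrix.mul_add, Matrix.mul_add]
    abel
  rw [hexp]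
  simp only [Matrix.trace_add, hRD, hDR, add_zero]
  linarith
end

section
/- Let n, m, p, r be positive natural numbers with r ≤ m. Let Z† be an n × m real matrix, X an n × p real matrix, W a p × r real matrix, and q ∈ ℝ^n with Q = diag(q). Suppose 2 Z†ᵀ Q X W = K Λ Lᵀ, where K is an m × r real matrix with Kᵀ K = I_r, L is an r × r real orthogonal matrix, and Λ = diag(λ₁, …, λ_r) with λ_k ≥ 0 for all k. Set V̂ = K Lᵀ. Then for every m × r real matrix V with Vᵀ V = I_r: ‖Z† − Q X W V̂ᵀ‖_F² ≤ ‖Z† − Q X W Vᵀ‖_F², where ‖M‖_F² = trace(Mᵀ M) is the squared Frobenius norm. -/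
open Matrix

theorem stmt_17 (n m p r : ℕ) (hn : 0 < n) (hm : 0 < m) (hp : 0 < p) (hr : 0 < r)
    (hrm : r ≤ m)
    (Zdag : Matrix (Fin n) (Fin m) ℝ)
    (X : Matrix (Fin n) (Fin p) ℝ)
    (W : Matrix (Fin p) (Fin r) ℝ)
    (q : Fin n → ℝ)
    (Q : Matrix (Fin n) (Fin n) ℝ) (hQ : Q = Matrix.diagonal q)
    (K : Matrix (Fin m) (Fin r) ℝ)
    (L : Matrix (Fin r) (Fin r) ℝ)
    (lam : Fin r → ℝ) (hlam : ∀ k, 0 ≤ lam k)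
    (hsvd : (2 : ℝ) • (Zdagᵀ * Q * X * W) = K * Matrix.diagonal lam * Lᵀ)
    (hK : Kᵀ * K = 1)
    (hL1 : Lᵀ * L = 1) (hL2 : L * Lᵀ = 1)
    (Vhat : Matrix (Fin m) (Fin r) ℝ) (hVhat : Vhat = K * Lᵀ) :
    ∀ V : Matrix (Fin m) (Fin r) ℝ, Vᵀ * V = 1 →
      ((Zdag - Q * X * W * Vhatᵀ)ᵀ * (Zdag - Q * X * W * Vhatᵀ)).trace ≤
      ((Zdag - Q * X * W * Vᵀ)ᵀ * (Zdag - Q * X * W * Vᵀ)).trace := by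
  intro V hV
  set A : Matrix (Fin n) (Fin r) ℝ := Q * X * W with hA
  -- Expansion of the squared Frobenius norm
  have expand : ∀ U : Matrix (Fin m) (Fin r) ℝ, Uᵀ * U = 1 →
      ((Zdag - A * Uᵀ)ᵀ * (Zdag - A * Uᵀ)).trace
        = (Zdagᵀ * Zdag).trace + (Aᵀ * A).trace - 2 * (Zdagᵀ * A * Uᵀ).trace := by
    intro U hU
    have h1 : (Zdag - A * Uᵀ)ᵀ = Zdagᵀ - U * Aᵀ := by
      simp [Matrix.transpose_sub, Matrix.transpose_mul]
    rw [h1, Matrix.sub_mul, Matrix.mul_sub, Matrix.mul_sub]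
    have h2 : (U * Aᵀ * (A * Uᵀ)).trace = (Aᵀ * A).trace := by
      rw [Matrix.trace_mul_comm]
      rw [show A * Uᵀ * (U * Aᵀ) = A * (Uᵀ * U) * Aᵀ by
        simp [Matrix.mul_assoc]]
      rw [hU, Matrix.mul_one, Matrix.trace_mul_comm]
    have h3 : (U * Aᵀ * Zdag).trace = (Zdagᵀ * A * Uᵀ).trace := by
      rw [show U * Aᵀ * Zdag = (Zdagᵀ * A * Uᵀ)ᵀ by
        simp only [Matrix.transpose_mul, Matrix.transpose_transpose, Matrix.mul_assoc]]
      exact Matrix.trace_transpose _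
    have h4 : Zdagᵀ * (A * Uᵀ) = Zdagᵀ * A * Uᵀ := (Matrix.mul_assoc _ _ _).symm
    rw [Matrix.trace_sub, Matrix.trace_sub, Matrix.trace_sub, h2, h3, h4]
    ring
  rw [expand Vhat (by rw [hVhat]; simp [Matrix.transpose_mul, Matrix.mul_assoc,
        Matrix.mul_assoc, hK, hL2]; rw [show L * (Kᵀ * (K * Lᵀ)) = L * (Kᵀ * K) * Lᵀ by
          simp [Matrix.mul_assoc], hK, Matrix.mul_one, hL2]),
      expand V hV]
  -- reduce to comparing the cross terms
  have key : (Zdagᵀ * A * Vᵀ).trace ≤ (Zdagᵀ * A * Vhatᵀ).trace := by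
    have hM : (2 : ℝ) • (Zdagᵀ * A) = K * Matrix.diagonal lam * Lᵀ := by
      rw [hA, ← Matrix.mul_assoc, ← Matrix.mul_assoc]; exact hsvd
    -- general formula for 2 * tr(Zᵀ A Uᵀ)
    have htr : ∀ U : Matrix (Fin m) (Fin r) ℝ,
        2 * (Zdagᵀ * A * Uᵀ).trace = ∑ k, lam k * (Lᵀ * Uᵀ * K) k k := by
      intro U
      have : (2 : ℝ) • (Zdagᵀ * A) * Uᵀ = K * Matrix.diagonal lam * Lᵀ * Uᵀ := by
        rw [hM]
      calc 2 * (Zdagᵀ * A * Uᵀ).trace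
          = ((2 : ℝ) • (Zdagᵀ * A) * Uᵀ).trace := by
            rw [Matrix.smul_mul, Matrix.trace_smul]; simp [Matrix.mul_assoc]
        _ = (K * Matrix.diagonal lam * Lᵀ * Uᵀ).trace := by rw [this]
        _ = (Matrix.diagonal lam * (Lᵀ * Uᵀ * K)).trace := by
            rw [show K * Matrix.diagonal lam * Lᵀ * Uᵀ
                  = (K * Matrix.diagonal lam) * (Lᵀ * Uᵀ) by simp [Matrix.mul_assoc],
              Matrix.trace_mul_comm,
              show Lᵀ * Uᵀ * (K * Matrix.diagonal lam)
                  = (Lᵀ * Uᵀ * K) * Matrix.diagonal lam by simp [Matrix.mul_assoc],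
              Matrix.trace_mul_comm]
        _ = ∑ k, lam k * (Lᵀ * Uᵀ * K) k k := by
            simp [Matrix.trace, Matrix.diag, Matrix.diagonal_mul]
    have hVhatdiag : Lᵀ * Vhatᵀ * K = 1 := by
      rw [hVhat]
      simp only [Matrix.transpose_mul, Matrix.transpose_transpose]
      rw [show Lᵀ * (L * Kᵀ) * K = (Lᵀ * L) * (Kᵀ * K) by simp [Matrix.mul_assoc],
        hL1, hK, Matrix.one_mul]
    -- each diagonal entry of Lᵀ Vᵀ K is at most 1
    have hdiag : ∀ k, (Lᵀ * Vᵀ * K) k k ≤ 1 := by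
      intro k
      have hB : (Lᵀ * Vᵀ * K) k k = ∑ i, (V * L) i k * K i k := by
        rw [show Lᵀ * Vᵀ = (V * L)ᵀ by simp [Matrix.transpose_mul]]
        simp [Matrix.mul_apply, Matrix.transpose_apply, mul_comm]
      have hBB : (∑ i, ((V * L) i k) ^ 2) = 1 := by
        have h : ((V * L)ᵀ * (V * L)) k k = (1 : Matrix (Fin r) (Fin r) ℝ) k k := by
          rw [show (V * L)ᵀ * (V * L) = Lᵀ * (Vᵀ * V) * L by
            simp [Matrix.transpose_mul, Matrix.mul_assoc], hV, Matrix.mul_one, hL1]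
        simpa [Matrix.mul_apply, Matrix.transpose_apply, sq, mul_comm] using h
      have hKK : (∑ i, (K i k) ^ 2) = 1 := by
        have h : (Kᵀ * K) k k = (1 : Matrix (Fin r) (Fin r) ℝ) k k := by rw [hK]
        simpa [Matrix.mul_apply, Matrix.transpose_apply, sq] using h
      have hcs := Finset.sum_mul_sq_le_sq_mul_sq Finset.univ (fun i => (V * L) i k)
        (fun i => K i k)
      rw [hBB, hKK, mul_one] at hcs
      rw [hB]
      nlinarith [hcs, sq_nonneg ((∑ i, (V * L) i k * K i k) - 1),
        sq_nonneg ((∑ i, (V * L) i k * K i k) + 1)]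
    have h2le : 2 * (Zdagᵀ * A * Vᵀ).trace ≤ 2 * (Zdagᵀ * A * Vhatᵀ).trace := by
      rw [htr V, htr Vhat, hVhatdiag]
      simp only [Matrix.one_apply_eq]
      apply Finset.sum_le_sum
      intro k _
      calc lam k * (Lᵀ * Vᵀ * K) k k ≤ lam k * 1 :=
        mul_le_mul_of_nonneg_left (hdiag k) (hlam k)
      _ = lam k * 1 := rfl
    linarith
  linarith
end

section
/- Let n, m, p, r be positive natural numbers. Let Z† be an n × m real matrix, X an n × p real matrix, V an m × r real matrix with Vᵀ V = I_r, and q ∈ ℝ^n with Q = diag(q) and Q² = diag(q₁², …, q_n²). Suppose the p × p matrix Xᵀ Q² X is invertible, and set Ŵ = (Xᵀ Q² X)^{-1} Xᵀ Q Z† V. Then for every p × r real matrix W: ‖Z† − Q X Ŵ Vᵀ‖_F² ≤ ‖Z† − Q X W Vᵀ‖_F², where ‖M‖_F² = trace(Mᵀ M) is the squared Frobenius norm. -/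
open Matrix

theorem stmt_18 (n m p r : ℕ) (hn : 0 < n) (hm : 0 < m) (hp : 0 < p) (hr : 0 < r)
    (Zdag : Matrix (Fin n) (Fin m) ℝ)
    (X : Matrix (Fin n) (Fin p) ℝ)
    (V : Matrix (Fin m) (Fin r) ℝ) (hV : Vᵀ * V = 1)
    (q : Fin n → ℝ)
    (Q : Matrix (Fin n) (Fin n) ℝ) (hQ : Q = Matrix.diagonal q)
    (Qsq : Matrix (Fin n) (Fin n) ℝ) (hQsq : Qsq = Matrix.diagonal fun i => q i ^ 2)
    (hinv : IsUnit (Xᵀ * Qsq * X))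
    (What : Matrix (Fin p) (Fin r) ℝ)
    (hWhat : What = (Xᵀ * Qsq * X)⁻¹ * Xᵀ * Q * Zdag * V) :
    ∀ W : Matrix (Fin p) (Fin r) ℝ,
      ((Zdag - Q * X * What * Vᵀ)ᵀ * (Zdag - Q * X * What * Vᵀ)).trace ≤
      ((Zdag - Q * X * W * Vᵀ)ᵀ * (Zdag - Q * X * W * Vᵀ)).trace := by
  intro W
  have hQT : Qᵀ = Q := by rw [hQ]; exact Matrix.diagonal_transpose q
  have hQQ : Q * Q = Qsq := by
    rw [hQ, hQsq, Matrix.diagonal_mul_diagonal]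
    congr 1; funext i; ring
  set S : Matrix (Fin p) (Fin p) ℝ := Xᵀ * Qsq * X with hS
  have hQsqT : Qsqᵀ = Qsq := by rw [hQsq]; exact Matrix.diagonal_transpose _
  have hST : Sᵀ = S := by
    rw [hS, Matrix.transpose_mul, Matrix.transpose_mul, hQsqT, Matrix.transpose_transpose,
      Matrix.mul_assoc]
  have hdet : IsUnit S.det := (Matrix.isUnit_iff_isUnit_det _).mp hinv
  have hSW : S * What = Xᵀ * Q * Zdag * V := by
    rw [hWhat]
    simp only [Matrix.mul_assoc]
    rw [Matrix.mul_nonsing_inv_cancel_left _ _ hdet]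
  -- cross terms
  have cross : ∀ U : Matrix (Fin p) (Fin r) ℝ,
      ((Q * X * U * Vᵀ)ᵀ * Zdag).trace = (Uᵀ * (S * What)).trace := by
    intro U
    have h1 : (Q * X * U * Vᵀ)ᵀ * Zdag = V * (Uᵀ * (Xᵀ * (Q * Zdag))) := by
      simp [Matrix.transpose_mul, hQT, Matrix.mul_assoc]
    rw [h1, Matrix.trace_mul_comm, hSW]
    simp [Matrix.mul_assoc]
  have sqq : ∀ U1 U2 : Matrix (Fin p) (Fin r) ℝ,
      ((Q * X * U1 * Vᵀ)ᵀ * (Q * X * U2 * Vᵀ)).trace = (U1ᵀ * (S * U2)).trace := by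
    intro U1 U2
    have h2 : Q * (Q * (X * (U2 * Vᵀ))) = Qsq * (X * (U2 * Vᵀ)) := by
      rw [← hQQ]; simp [Matrix.mul_assoc]
    have h1 : (Q * X * U1 * Vᵀ)ᵀ * (Q * X * U2 * Vᵀ)
        = V * (U1ᵀ * (Xᵀ * (Qsq * (X * (U2 * Vᵀ))))) := by
      simp [Matrix.transpose_mul, hQT, Matrix.mul_assoc, h2]
    rw [h1, Matrix.trace_mul_comm]
    have h3 : U1ᵀ * (Xᵀ * (Qsq * (X * (U2 * Vᵀ)))) * V
        = U1ᵀ * (S * U2) * (Vᵀ * V) := by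
      rw [hS]; simp [Matrix.mul_assoc]
    rw [h3, hV, Matrix.mul_one]
  -- symmetry of cross in the other order
  have crossT : ∀ U : Matrix (Fin p) (Fin r) ℝ,
      (Zdagᵀ * (Q * X * U * Vᵀ)).trace = (Uᵀ * (S * What)).trace := by
    intro U
    rw [← Matrix.trace_transpose (Zdagᵀ * (Q * X * U * Vᵀ)), Matrix.transpose_mul,
      Matrix.transpose_transpose]
    exact cross U
  have expand : ∀ U : Matrix (Fin p) (Fin r) ℝ,
      ((Zdag - Q * X * U * Vᵀ)ᵀ * (Zdag - Q * X * U * Vᵀ)).trace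
        = (Zdagᵀ * Zdag).trace - 2 * (Uᵀ * (S * What)).trace + (Uᵀ * (S * U)).trace := by
    intro U
    simp only [Matrix.transpose_sub, Matrix.sub_mul, Matrix.mul_sub, Matrix.trace_sub]
    rw [cross U, crossT U, sqq U U]
    ring
  -- the residual term
  set D : Matrix (Fin n) (Fin r) ℝ := Q * X * (W - What) with hD
  have hDpos : 0 ≤ (Dᵀ * D).trace := by
    rw [Matrix.trace]
    apply Finset.sum_nonneg
    intro i _
    simp only [Matrix.diag_apply, Matrix.mul_apply, Matrix.transpose_apply]
    apply Finset.sum_nonneg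
    intro j _
    exact mul_self_nonneg _
  have hDtrace : (Dᵀ * D).trace
      = (Wᵀ * (S * W)).trace - 2 * (Wᵀ * (S * What)).trace + (Whatᵀ * (S * What)).trace := by
    have h1 : Dᵀ * D = (W - What)ᵀ * (S * (W - What)) := by
      rw [hD, Matrix.transpose_mul, Matrix.transpose_mul, hQT, hS, ← hQQ]
      simp [Matrix.mul_assoc]
    have hsym : (Whatᵀ * (S * W)).trace = (Wᵀ * (S * What)).trace := by
      rw [← Matrix.trace_transpose (Whatᵀ * (S * W))]
      simp [Matrix.transpose_mul, hST, Matrix.mul_assoc, Matrix.trace_mul_comm (Wᵀ * Sᵀ)]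
    rw [h1]
    simp only [Matrix.transpose_sub, Matrix.sub_mul, Matrix.mul_sub, Matrix.trace_sub]
    rw [hsym]
    ring
  have hW := expand W
  have hWhat' := expand What
  -- key: trace at What uses S*What twice
  rw [hW, hWhat']
  linarith [hDpos, hDtrace]
end
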